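/- Let d be divisible by 8, let v ∈ {0,1}^d have Hamming weight d/8, and for w ∈ {0,1}^{d/8} let v(w) ∈ {0,1,*}^d and r_{v(w)} ∈ {0,1}^d be as in the character decomposition. Then for every U ⊆ {0,1}^d and every f : U → ℝ, Σ_{u ∈ U} χ_v(u) f(u) = Σ_{w ∈ {0,1}^{d/8}} (-1)^{⟨v, r_{v(w)}⟩₂} (Σ_{u ∈ S_{v(w)} ∩ U} f(u)). Consequently, if |Σ_{u ∈ S ∩ U} f(u)| ≤ D for every set S of the subcube set system S^d, then |Σ_{u ∈ U} χ_v(u) f(u)| ≤ 2^{d/8} · D. -/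

import Mathlib

/-!
`χ_v(u)` depends only on the restriction of `u` to the 1-coordinates of `v`, and the fibres of
that restriction map on `U` are exactly the sets `S_{v(w)} ∩ U`, on which `χ_v` is constantly
`χ_v(r_{v(w)})`. Summing fibrewise gives the decomposition; the triangle inequality over the
`2^{wt v}` fibres gives the bound.
-/

/-- The `F₂` inner product `⟨v,u⟩₂` of `v, u ∈ {0,1}^d`, represented by the
number of coordinates where both equal `1` (so that `(-1)^{⟨v,u⟩₂}` is
`(-1)` raised to this count). -/
def inner2 {d : ℕ} (v u : Fin d → Bool) : ℕ :=
  (Finset.univ.filter (fun i => v i = true ∧ u i = true)).card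

/-- The character `χ_v(u) = (-1)^{⟨v,u⟩₂}` of `F₂^d`. -/
def chi {d : ℕ} (v u : Fin d → Bool) : ℝ :=
  (-1 : ℝ) ^ inner2 v u

/-- The Hamming weight of `v ∈ {0,1}^d`. -/
def wt {d : ℕ} (v : Fin d → Bool) : ℕ :=
  (Finset.univ.filter (fun i => v i = true)).card

/-- For `v ∈ {0,1,*}^d` (where `*` is encoded as `none`), the subcube
`S_v = {u ∈ {0,1}^d : vᵢ ≠ * → uᵢ = vᵢ}`. -/
def subcube {d : ℕ} (v : Fin d → Option Bool) : Finset (Fin d → Bool) :=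
  Finset.univ.filter (fun u => ∀ i : Fin d, ∀ b : Bool, v i = some b → u i = b)

/-- The set system `S^d` of all subcubes of the boolean cube `{0,1}^d`. -/
def cubeSystem (d : ℕ) : Finset (Finset (Fin d → Bool)) :=
  Finset.univ.image (fun v : Fin d → Option Bool => subcube v)

/-- The extension `v(w) ∈ {0,1,*}^d` of `w ∈ {0,1}^{supp(v)}`: it equals `w`
on the 1-coordinates of `v` and `*` (i.e. `none`) elsewhere. (Indexing `w` by
the set of 1-coordinates of `v` is the same as indexing by `[d/8]` via the
increasing enumeration `i₁ < i₂ < … < i_{d/8}` of that set.) -/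
def extOf {d : ℕ} (v : Fin d → Bool) (w : {i : Fin d // v i = true} → Bool) :
    Fin d → Option Bool :=
  fun i => if h : v i = true then some (w ⟨i, h⟩) else none

/-- The representative `r_{v(w)} ∈ {0,1}^d` of the subcube `S_{v(w)}`,
obtained from `v(w)` by replacing every `*` with `0`. -/
def repOf {d : ℕ} (v : Fin d → Bool) (w : {i : Fin d // v i = true} → Bool) :
    Fin d → Bool :=
  fun i => if h : v i = true then w ⟨i, h⟩ else false

open Finset

variable {d : ℕ}

def restrictSupp (v u : Fin d → Bool) : {i : Fin d // v i = true} → Bool :=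
  fun i => u i.1

theorem mem_subcube_extOf {v : Fin d → Bool} {w : {i : Fin d // v i = true} → Bool}
    {u : Fin d → Bool} : u ∈ subcube (extOf v w) ↔ restrictSupp v u = w := by
  rw [subcube, Finset.mem_filter]
  simp only [extOf, mem_univ, true_and, funext_iff, restrictSupp]
  constructor
  · intro h i
    exact h i.1 (w i) (by simp [dif_pos i.2])
  · intro h i b hb
    by_cases hvi : v i = true
    · simp only [dif_pos hvi, Option.some.injEq] at hb
      exact hb ▸ h ⟨i, hvi⟩
    · simp [dif_neg hvi] at hb

theorem inner2_congr {v u u' : Fin d → Bool} (h : restrictSupp v u = restrictSupp v u') :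
    inner2 v u = inner2 v u' := by
  unfold inner2
  congr 1
  ext i
  simp only [mem_filter, mem_univ, true_and, and_congr_right_iff]
  intro hvi
  rw [show u i = u' i from congr_fun h ⟨i, hvi⟩]

theorem restrictSupp_repOf (v : Fin d → Bool) (w : {i : Fin d // v i = true} → Bool) :
    restrictSupp v (repOf v w) = w := by
  funext i
  simp [restrictSupp, repOf, dif_pos i.2]

theorem chi_eq_of_mem_subcube_extOf {v : Fin d → Bool} {w : {i : Fin d // v i = true} → Bool}
    {u : Fin d → Bool} (hu : u ∈ subcube (extOf v w)) : chi v u = chi v (repOf v w) :=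
  congrArg ((-1 : ℝ) ^ ·) <|
    inner2_congr ((mem_subcube_extOf.1 hu).trans (restrictSupp_repOf v w).symm)

theorem abs_chi (v u : Fin d → Bool) : |chi v u| = 1 := by
  simp [chi]

theorem card_supp_fun_bool (v : Fin d → Bool) :
    Fintype.card ({i : Fin d // v i = true} → Bool) = 2 ^ wt v := by
  rw [Fintype.card_fun, Fintype.card_bool, Fintype.card_subtype, wt]

theorem sum_chi_mul_eq_sum_subcube (v : Fin d → Bool) (U : Finset (Fin d → Bool))
    (f : (Fin d → Bool) → ℝ) :
    ∑ u ∈ U, chi v u * f u =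
      ∑ w, chi v (repOf v w) * ∑ u ∈ subcube (extOf v w) ∩ U, f u := by
  rw [← sum_fiberwise U (restrictSupp v)]
  refine sum_congr rfl fun w _ => ?_
  have hfiber : U.filter (fun u => restrictSupp v u = w) = subcube (extOf v w) ∩ U := by
    ext u
    rw [mem_filter, mem_inter, mem_subcube_extOf, and_comm]
  rw [hfiber, mul_sum]
  exact sum_congr rfl fun u hu => by rw [chi_eq_of_mem_subcube_extOf (mem_inter.1 hu).1]

theorem abs_sum_chi_mul_le (v : Fin d → Bool) (U : Finset (Fin d → Bool))
    (f : (Fin d → Bool) → ℝ) {D : ℝ} (hD : ∀ S ∈ cubeSystem d, |∑ u ∈ S ∩ U, f u| ≤ D) :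
    |∑ u ∈ U, chi v u * f u| ≤ 2 ^ wt v * D := by
  calc |∑ u ∈ U, chi v u * f u|
      ≤ ∑ w, |chi v (repOf v w) * ∑ u ∈ subcube (extOf v w) ∩ U, f u| := by
        rw [sum_chi_mul_eq_sum_subcube]
        exact abs_sum_le_sum_abs _ _
    _ ≤ ∑ _w : {i : Fin d // v i = true} → Bool, D := by
        refine sum_le_sum fun w _ => ?_
        rw [abs_mul, abs_chi, one_mul]
        exact hD _ (mem_image_of_mem _ (mem_univ _))
    _ = 2 ^ wt v * D := by
        rw [sum_const, card_univ, card_supp_fun_bool, nsmul_eq_mul]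
        push_cast
        rfl

theorem chi_sum_decomposition_general (d : ℕ)
    (v : Fin d → Bool) (hv : wt v = d / 8)
    (U : Finset (Fin d → Bool)) (f : (Fin d → Bool) → ℝ) :
    ((∑ u ∈ U, chi v u * f u) = ∑ w : ({i : Fin d // v i = true} → Bool),
        (-1 : ℝ) ^ inner2 v (repOf v w) * ∑ u ∈ subcube (extOf v w) ∩ U, f u) ∧
    (∀ D : ℝ, (∀ S ∈ cubeSystem d, |∑ u ∈ S ∩ U, f u| ≤ D) →
        |∑ u ∈ U, chi v u * f u| ≤ (2 : ℝ) ^ (d / 8) * D) :=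
  ⟨sum_chi_mul_eq_sum_subcube v U f, fun _ hD => hv ▸ abs_sum_chi_mul_le v U f hD⟩

/-- For `d` a positive multiple of `8` and `v ∈ {0,1}^d` of
Hamming weight `d/8`: for every `U ⊆ {0,1}^d` and `f : U → ℝ`,
`∑_{u ∈ U} χ_v(u) f(u) = ∑_{w ∈ {0,1}^{d/8}} (-1)^{⟨v, r_{v(w)}⟩₂} ∑_{u ∈ S_{v(w)} ∩ U} f(u)`;
consequently, if `|∑_{u ∈ S ∩ U} f(u)| ≤ D` for every set `S ∈ S^d`, then
`|∑_{u ∈ U} χ_v(u) f(u)| ≤ 2^{d/8} · D`. -/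
theorem chi_sum_decomposition (d : ℕ) (hd : 0 < d) (h8 : 8 ∣ d)
    (v : Fin d → Bool) (hv : wt v = d / 8)
    (U : Finset (Fin d → Bool)) (f : (Fin d → Bool) → ℝ) :
    ((∑ u ∈ U, chi v u * f u) = ∑ w : ({i : Fin d // v i = true} → Bool),
        (-1 : ℝ) ^ inner2 v (repOf v w) * ∑ u ∈ subcube (extOf v w) ∩ U, f u) ∧
    (∀ D : ℝ, (∀ S ∈ cubeSystem d, |∑ u ∈ S ∩ U, f u| ≤ D) →
        |∑ u ∈ U, chi v u * f u| ≤ (2 : ℝ) ^ (d / 8) * D) :=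
  chi_sum_decomposition_general d v hv U f
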